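/- arXiv:1901.07921 — 7 statements merged into one kernel-verified Lean document; each statement's English description precedes it below -/
import Mathlib

section
/- Let F be a left R-module and G an S-R-bimodule such that Tor_1^R(G, F) = 0. Then for every left S-module M there is an injective map of abelian groups Ext^1_R(F, Hom_S(G, M)) → Ext^1_S(G ⊗_R F, M). -/
/-!
Take projective resolutions `P → F` over `R` and `Q → G ⊗_R F` over `S`. As `Tor₁^R(G, F) = 0`,
the complex `G ⊗_R P` is exact in degrees `0` and `1`, which is all that is needed to lift the
identity of `G ⊗_R F` to maps `fᵢ : Qᵢ → G ⊗_R Pᵢ` for `i ≤ 2`. Under the tensor-hom adjunction a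
cocycle `u : P₁ → Hom_S(G, M)` becomes `ũ : G ⊗_R P₁ → M`, and `u ↦ ũ ∘ f₁` maps cocycles to
cocycles and coboundaries to coboundaries. Conversely, if `ũ ∘ f₁ = v ∘ d` is a coboundary, then
`v` on the image of `f₀` and `ũ` on the image of `G ⊗ d` glue to a map on `G ⊗_R P₀` (by
exactness of both complexes in low degrees) exhibiting `ũ`, hence `u`, as a coboundary.
-/

universe u

noncomputable section

open CategoryTheory

variable {R S : Type u} [CommRing R] [CommRing S]

/-- The `R`-module structure on `Hom_S(G, M)` coming from the right `R`-module
structure of the `S`-`R`-bimodule `G`. -/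
instance homModule (G : Type u) [AddCommGroup G] [Module S G] [Module R G]
    [SMulCommClass R S G] (M : Type u) [AddCommGroup M] [Module S M] :
    Module R (G →ₗ[S] M) where
  smul r f := f ∘ₗ DistribMulAction.toLinearMap S G r
  one_smul f := by
    ext g
    show f ((1 : R) • g) = f g
    rw [one_smul]
  mul_smul r r' f := by
    ext g
    show f ((r * r') • g) = f (r' • r • g)
    rw [← mul_smul, mul_comm]
  smul_zero r := by ext g; rfl
  smul_add r f f' := by ext g; rfl
  add_smul r r' f := by
    ext g
    show f ((r + r') • g) = f (r • g) + f (r' • g)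
    rw [add_smul, map_add]
  zero_smul f := by
    ext g
    show f ((0 : R) • g) = 0
    rw [zero_smul, map_zero]

abbrev ext1 (A : Type u) [CommRing A] (X Y : ModuleCat.{u} A) : Type u :=
  ((Ext A (ModuleCat.{u} A) 1).obj (Opposite.op X)).obj Y

open scoped TensorProduct

section

variable {A : Type*} [Ring A]

theorem LinearMap.exists_comp_eq_of_surjective {M N P : Type*} [AddCommGroup M] [Module A M]
    [AddCommGroup N] [Module A N] [AddCommGroup P] [Module A P] {f : M →ₗ[A] N}
    (hf : Function.Surjective f) {g : M →ₗ[A] P} (h : LinearMap.ker f ≤ LinearMap.ker g) :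
    ∃ w : N →ₗ[A] P, w ∘ₗ f = g :=
  ⟨(LinearMap.ker f).liftQ g h ∘ₗ (f.quotKerEquivOfSurjective hf).symm.toLinearMap, by
    ext x; simp⟩

theorem Function.Exact.exists_comp_eq_of_projective {P C₁ C₀ X : Type*} [AddCommGroup P]
    [Module A P] [Module.Projective A P] [AddCommGroup C₁] [Module A C₁] [AddCommGroup C₀]
    [Module A C₀] [AddCommGroup X] [Module A X] {d : C₁ →ₗ[A] C₀} {ε : C₀ →ₗ[A] X}
    (h : Function.Exact d ε) {g : P →ₗ[A] C₀} (hg : ε ∘ₗ g = 0) :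
    ∃ f : P →ₗ[A] C₁, d ∘ₗ f = g := by
  obtain ⟨f, hf⟩ := Module.projective_lifting_property d.rangeRestrict
    (g.codRestrict (LinearMap.range d) fun p => (h (g p)).1 (LinearMap.congr_fun hg p))
    d.surjective_rangeRestrict
  exact ⟨f, by ext p; exact congr_arg Subtype.val (LinearMap.congr_fun hf p)⟩

theorem exists_comparison_maps {Q₂ Q₁ Q₀ C₂ C₁ C₀ X : Type*}
    [AddCommGroup Q₂] [Module A Q₂] [Module.Projective A Q₂]
    [AddCommGroup Q₁] [Module A Q₁] [Module.Projective A Q₁]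
    [AddCommGroup Q₀] [Module A Q₀] [Module.Projective A Q₀]
    [AddCommGroup C₂] [Module A C₂] [AddCommGroup C₁] [Module A C₁]
    [AddCommGroup C₀] [Module A C₀] [AddCommGroup X] [Module A X]
    {dQ₂ : Q₂ →ₗ[A] Q₁} {dQ₁ : Q₁ →ₗ[A] Q₀} {εQ : Q₀ →ₗ[A] X}
    (hQ₂ : dQ₁ ∘ₗ dQ₂ = 0) (hQ₁ : εQ ∘ₗ dQ₁ = 0)
    {d₂ : C₂ →ₗ[A] C₁} {d₁ : C₁ →ₗ[A] C₀} {ε : C₀ →ₗ[A] X}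
    (h₁ : Function.Exact d₂ d₁) (h₀ : Function.Exact d₁ ε) (hε : Function.Surjective ε) :
    ∃ (f₀ : Q₀ →ₗ[A] C₀) (f₁ : Q₁ →ₗ[A] C₁) (f₂ : Q₂ →ₗ[A] C₂),
      ε ∘ₗ f₀ = εQ ∧ d₁ ∘ₗ f₁ = f₀ ∘ₗ dQ₁ ∧ d₂ ∘ₗ f₂ = f₁ ∘ₗ dQ₂ := by
  obtain ⟨f₀, hf₀⟩ := Module.projective_lifting_property ε εQ hε
  obtain ⟨f₁, hf₁⟩ := h₀.exists_comp_eq_of_projective (g := f₀ ∘ₗ dQ₁) (by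
    rw [← LinearMap.comp_assoc, hf₀, hQ₁])
  obtain ⟨f₂, hf₂⟩ := h₁.exists_comp_eq_of_projective (g := f₁ ∘ₗ dQ₂) (by
    rw [← LinearMap.comp_assoc, hf₁, LinearMap.comp_assoc, hQ₂, LinearMap.comp_zero])
  exact ⟨f₀, f₁, f₂, hf₀, hf₁, hf₂⟩

theorem exists_comp_eq_of_comparison {Q₁ Q₀ C₁ C₀ X N : Type*}
    [AddCommGroup Q₁] [Module A Q₁] [AddCommGroup Q₀] [Module A Q₀]
    [AddCommGroup C₁] [Module A C₁] [AddCommGroup C₀] [Module A C₀]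
    [AddCommGroup X] [Module A X] [AddCommGroup N] [Module A N]
    {dQ : Q₁ →ₗ[A] Q₀} {εQ : Q₀ →ₗ[A] X} {d : C₁ →ₗ[A] C₀} {ε : C₀ →ₗ[A] X}
    (hQ : Function.Exact dQ εQ) (hεQ : Function.Surjective εQ) (hC : Function.Exact d ε)
    {f₀ : Q₀ →ₗ[A] C₀} {f₁ : Q₁ →ₗ[A] C₁} (h₀ : ε ∘ₗ f₀ = εQ) (h₁ : d ∘ₗ f₁ = f₀ ∘ₗ dQ)
    {u : C₁ →ₗ[A] N} (hu : LinearMap.ker d ≤ LinearMap.ker u)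
    {v : Q₀ →ₗ[A] N} (hv : u ∘ₗ f₁ = v ∘ₗ dQ) :
    ∃ w : C₀ →ₗ[A] N, w ∘ₗ d = u := by
  have hψ : Function.Surjective (f₀.coprod d) := by
    intro x
    obtain ⟨q, hq⟩ := hεQ (ε x)
    obtain ⟨y, hy⟩ := (hC (x - f₀ q)).1 (by
      rw [map_sub, ← LinearMap.comp_apply, h₀, hq, sub_self])
    exact ⟨(q, y), by simp [hy]⟩
  have hker : LinearMap.ker (f₀.coprod d) ≤ LinearMap.ker (v.coprod u) := by
    rintro ⟨q, y⟩ hqy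
    simp only [LinearMap.mem_ker, LinearMap.coprod_apply] at hqy ⊢
    obtain ⟨q', rfl⟩ := (hQ q).1 (by
      rw [← h₀, LinearMap.comp_apply, eq_neg_of_add_eq_zero_left hqy, map_neg,
        hC.apply_apply_eq_zero, neg_zero])
    have : u (f₁ q' + y) = 0 := hu (by
      rw [LinearMap.mem_ker, map_add, ← LinearMap.comp_apply, h₁, LinearMap.comp_apply, hqy])
    rwa [map_add, ← LinearMap.comp_apply, hv, LinearMap.comp_apply] at this
  obtain ⟨w, hw⟩ := LinearMap.exists_comp_eq_of_surjective hψ hker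
  exact ⟨w, by ext y; simpa using LinearMap.congr_fun hw (0, y)⟩

end

namespace LinearMap

variable (S) (G : Type u) [AddCommGroup G] [Module S G] [Module R G] [SMulCommClass R S G]
variable {P P' : Type u} [AddCommGroup P] [Module R P] [AddCommGroup P'] [Module R P']

def lTensorBimod (d : P →ₗ[R] P') : G ⊗[R] P →ₗ[S] G ⊗[R] P' where
  __ := d.lTensor G
  map_smul' s x := by
    induction x using TensorProduct.induction_on with
    | zero => simp
    | tmul g p => simp [TensorProduct.smul_tmul']
    | add x y hx hy => simp_all

end LinearMap

namespace TensorProduct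

variable {G : Type u} [AddCommGroup G] [Module S G] [Module R G] [SMulCommClass R S G]
variable {P P' : Type u} [AddCommGroup P] [Module R P] [AddCommGroup P'] [Module R P']
variable {M : Type u} [AddCommGroup M] [Module S M]

@[ext]
theorem bimod_ext {f f' : G ⊗[R] P →ₗ[S] M} (h : ∀ g p, f (g ⊗ₜ p) = f' (g ⊗ₜ p)) : f = f' := by
  ext x
  induction x using TensorProduct.induction_on with
  | zero => simp
  | tmul g p => exact h g p
  | add x y hx hy => rw [map_add, map_add, hx, hy]

variable (S G P M) in
def homBimodEquiv : (P →ₗ[R] G →ₗ[S] M) ≃+ (G ⊗[R] P →ₗ[S] M) where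
  toFun u :=
    { __ := liftAddHom
        { toFun g := { toFun p := u p g, map_zero' := by simp, map_add' _ _ := by simp }
          map_zero' := by ext; simp
          map_add' _ _ := by ext; simp }
        fun r g p => by show u p (r • g) = u (r • p) g; rw [u.map_smul]; rfl
      map_smul' s x := by
        induction x using TensorProduct.induction_on with
        | zero => simp
        | tmul g p => simp [smul_tmul']
        | add x y hx hy => simp_all }
  invFun c :=
    { toFun p :=
        { toFun g := c (g ⊗ₜ p)
          map_add' _ _ := by simp [add_tmul]
          map_smul' _ _ := by simp [← smul_tmul'] }
      map_add' _ _ := by ext; simp [tmul_add]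
      map_smul' r p := by ext g; exact congr_arg c (smul_tmul r g p).symm }
  left_inv u := by ext; rfl
  right_inv c := by ext; rfl
  map_add' u v := by ext; rfl

theorem homBimodEquiv_comp (u : P' →ₗ[R] G →ₗ[S] M) (d : P →ₗ[R] P') :
    homBimodEquiv S G P M (u ∘ₗ d) = homBimodEquiv S G P' M u ∘ₗ d.lTensorBimod S G := by
  ext; rfl

theorem ker_lTensorBimod_le_ker_homBimodEquiv {P'' : Type u} [AddCommGroup P''] [Module R P'']
    {d₂ : P'' →ₗ[R] P} {d₁ : P →ₗ[R] P'}
    (h : Function.Exact (d₂.lTensorBimod S G) (d₁.lTensorBimod S G))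
    {u : P →ₗ[R] G →ₗ[S] M} (hu : u ∘ₗ d₂ = 0) :
    LinearMap.ker (d₁.lTensorBimod S G) ≤ LinearMap.ker (homBimodEquiv S G P M u) := by
  intro x hx
  obtain ⟨y, rfl⟩ := (h x).1 hx
  rw [LinearMap.mem_ker, ← LinearMap.comp_apply, ← homBimodEquiv_comp, hu, map_zero,
    LinearMap.zero_apply]

end TensorProduct

theorem AddMonoidHom.exists_injective_of_comp_eq_zero_iff {K₁ K₂ H₁ H₂ : Type*} [AddCommGroup K₁]
    [AddCommGroup K₂] [AddCommGroup H₁] [AddCommGroup H₂] {π₁ : K₁ →+ H₁}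
    (hπ₁ : Function.Surjective π₁) (π₂ : K₂ →+ H₂) (α : K₁ →+ K₂)
    (h : ∀ x, π₂ (α x) = 0 ↔ π₁ x = 0) : ∃ ψ : H₁ →+ H₂, Function.Injective ψ := by
  let ψ := π₁.liftOfRightInverse _ (Function.rightInverse_surjInv hπ₁)
    ⟨π₂.comp α, fun x hx => (h x).2 hx⟩
  refine ⟨ψ, (injective_iff_map_eq_zero ψ).2 fun y hy => ?_⟩
  obtain ⟨x, rfl⟩ := hπ₁ y
  exact (h x).1 (by simpa [ψ] using hy)

namespace CategoryTheory.ShortComplex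

theorem exists_injective_homology_addMonoidHom {A B : Type u} [Ring A] [Ring B]
    (S₁ : ShortComplex (ModuleCat.{u} A)) (S₂ : ShortComplex (ModuleCat.{u} B))
    (φ : S₁.X₂ →+ S₂.X₂) (hcycles : ∀ x, S₁.g x = 0 → S₂.g (φ x) = 0)
    (hboundaries : ∀ x, S₁.g x = 0 → ((∃ y, S₂.f y = φ x) ↔ ∃ y, S₁.f y = x)) :
    ∃ ψ : S₁.homology →+ S₂.homology, Function.Injective ψ := by
  let α : LinearMap.ker S₁.g.hom →+ LinearMap.ker S₂.g.hom :=
    { toFun x := ⟨φ x, hcycles x x.2⟩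
      map_zero' := by ext; simp
      map_add' _ _ := by ext; simp }
  obtain ⟨ψ, hψ⟩ := AddMonoidHom.exists_injective_of_comp_eq_zero_iff
    (π₁ := (LinearMap.range S₁.moduleCatToCycles).mkQ.toAddMonoidHom) (Submodule.mkQ_surjective _)
    (LinearMap.range S₂.moduleCatToCycles).mkQ.toAddMonoidHom α fun x => by
      simp only [LinearMap.toAddMonoidHom_coe, Submodule.mkQ_apply, Submodule.Quotient.mk_eq_zero,
        LinearMap.mem_range, Subtype.ext_iff]
      exact hboundaries x x.2
  exact ⟨S₂.moduleCatHomologyIso.symm.toLinearEquiv.toAddMonoidHom.comp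
      (ψ.comp S₁.moduleCatHomologyIso.toLinearEquiv.toAddMonoidHom),
    S₂.moduleCatHomologyIso.symm.toLinearEquiv.injective.comp
      (hψ.comp S₁.moduleCatHomologyIso.toLinearEquiv.injective)⟩

end CategoryTheory.ShortComplex

namespace CategoryTheory.ProjectiveResolution

theorem exists_injective_ext1_addMonoidHom {A B : Type u} [CommRing A] [CommRing B]
    {X N : ModuleCat.{u} A} {Y N' : ModuleCat.{u} B}
    (P : ProjectiveResolution X) (Q : ProjectiveResolution Y)
    (φ : (P.complex.X 1 →ₗ[A] N) →+ (Q.complex.X 1 →ₗ[B] N'))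
    (hcycles : ∀ u, u ∘ₗ (P.complex.d 2 1).hom = 0 → φ u ∘ₗ (Q.complex.d 2 1).hom = 0)
    (hboundaries : ∀ u, u ∘ₗ (P.complex.d 2 1).hom = 0 →
      ((∃ w, w ∘ₗ (Q.complex.d 1 0).hom = φ u) ↔ ∃ w, w ∘ₗ (P.complex.d 1 0).hom = u)) :
    ∃ ψ : ext1 A X N →+ ext1 B Y N', Function.Injective ψ := by
  let e₁ := P.isoExt 1 N ≪≫
    (P.complex.linearYonedaObj A N).homologyIsoSc' 0 1 2 (by simp) (by simp)
  let e₂ := Q.isoExt 1 N' ≪≫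
    (Q.complex.linearYonedaObj B N').homologyIsoSc' 0 1 2 (by simp) (by simp)
  obtain ⟨ψ, hψ⟩ := ShortComplex.exists_injective_homology_addMonoidHom
    ((P.complex.linearYonedaObj A N).sc' 0 1 2) ((Q.complex.linearYonedaObj B N').sc' 0 1 2)
    (ModuleCat.homAddEquiv.symm.toAddMonoidHom.comp (φ.comp ModuleCat.homAddEquiv.toAddMonoidHom))
    (fun u hu => ModuleCat.hom_ext (hcycles u.hom (congr_arg ModuleCat.Hom.hom hu)))
    fun u hu => by
      have h := hboundaries u.hom (congr_arg ModuleCat.Hom.hom hu)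
      constructor <;> rintro ⟨w, hw⟩
      · obtain ⟨w', hw'⟩ := h.1 ⟨w.hom, congr_arg ModuleCat.Hom.hom hw⟩
        exact ⟨ModuleCat.ofHom w', ModuleCat.hom_ext hw'⟩
      · obtain ⟨w', hw'⟩ := h.2 ⟨w.hom, congr_arg ModuleCat.Hom.hom hw⟩
        exact ⟨ModuleCat.ofHom w', ModuleCat.hom_ext hw'⟩
  exact ⟨e₂.symm.toLinearEquiv.toAddMonoidHom.comp (ψ.comp e₁.toLinearEquiv.toAddMonoidHom),
    e₂.symm.toLinearEquiv.injective.comp (hψ.comp e₁.toLinearEquiv.injective)⟩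

theorem exact_lTensor_of_subsingleton_tor {A : Type u} [CommRing A] {X : ModuleCat.{u} A}
    (P : ProjectiveResolution X) (G : ModuleCat.{u} A)
    (htor : Subsingleton (((Tor (ModuleCat.{u} A) 1).obj G).obj X)) :
    Function.Exact ((P.complex.d 2 1).hom.lTensor G) ((P.complex.d 1 0).hom.lTensor G) := by
  let T := (MonoidalCategory.tensoringLeft (ModuleCat.{u} A)).obj G
  have : Subsingleton ((T.leftDerived 1).obj X) := htor
  have hzero : Limits.IsZero (((T.mapHomologicalComplex _).obj P.complex).homology 1) :=
    (ModuleCat.isZero_of_subsingleton _).of_iso (P.isoLeftDerivedObj T 1).symm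
  have hexact := (((T.mapHomologicalComplex _).obj P.complex).exactAt_iff' 2 1 0
    (by simp) (by simp)).1 ((HomologicalComplex.exactAt_iff_isZero_homology _ 1).2 hzero)
  exact (ShortComplex.ShortExact.moduleCat_exact_iff_function_exact _).1 hexact

section

variable {A : Type u} [Ring A] {X : ModuleCat.{u} A} (P : ProjectiveResolution X)

theorem function_exact₀ : Function.Exact (P.complex.d 1 0).hom (P.π.f 0).hom :=
  (ShortComplex.ShortExact.moduleCat_exact_iff_function_exact _).1 P.exact₀

theorem surjective_π_f_zero : Function.Surjective (P.π.f 0).hom :=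
  (ModuleCat.epi_iff_surjective _).1 inferInstance

end

open TensorProduct in
theorem exists_injective_ext1_of_exact_lTensor
    {X : ModuleCat.{u} R} (P : ProjectiveResolution X)
    (G : Type u) [AddCommGroup G] [Module S G] [Module R G] [SMulCommClass R S G]
    (hP : Function.Exact ((P.complex.d 2 1).hom.lTensor G) ((P.complex.d 1 0).hom.lTensor G))
    (M : Type u) [AddCommGroup M] [Module S M] :
    ∃ φ : ext1 R X (ModuleCat.of R (G →ₗ[S] M)) →+
        ext1 S (ModuleCat.of S (G ⊗[R] X)) (ModuleCat.of S M),
      Function.Injective φ := by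
  let Q := ProjectiveResolution.of (ModuleCat.of S (G ⊗[R] X))
  have h₁ : Function.Exact ((P.complex.d 2 1).hom.lTensorBimod S G)
      ((P.complex.d 1 0).hom.lTensorBimod S G) := hP
  have h₀ : Function.Exact ((P.complex.d 1 0).hom.lTensorBimod S G)
      ((P.π.f 0).hom.lTensorBimod S G) :=
    lTensor_exact G P.function_exact₀ P.surjective_π_f_zero
  obtain ⟨f₀, f₁, f₂, hf₀, hf₁, hf₂⟩ := exists_comparison_maps (dQ₂ := (Q.complex.d 2 1).hom)
    (dQ₁ := (Q.complex.d 1 0).hom) (εQ := (Q.π.f 0).hom)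
    (congr_arg ModuleCat.Hom.hom (Q.complex.d_comp_d 2 1 0))
    (congr_arg ModuleCat.Hom.hom Q.complex_d_comp_π_f_zero) h₁ h₀
    (LinearMap.lTensor_surjective G P.surjective_π_f_zero)
  refine P.exists_injective_ext1_addMonoidHom Q ((LinearMap.lcomp S M f₁).toAddMonoidHom.comp
    (homBimodEquiv S G _ M).toAddMonoidHom) (fun u hu => ?_) (fun u hu => ?_)
  · change homBimodEquiv S G _ M u ∘ₗ f₁ ∘ₗ _ = 0
    rw [← hf₂, ← LinearMap.comp_assoc, ← homBimodEquiv_comp, hu, map_zero, LinearMap.zero_comp]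
  constructor
  · rintro ⟨v, hv⟩
    obtain ⟨w, hw⟩ := exists_comp_eq_of_comparison Q.function_exact₀ Q.surjective_π_f_zero h₀
      hf₀ hf₁ (ker_lTensorBimod_le_ker_homBimodEquiv h₁ hu) hv.symm
    refine ⟨(homBimodEquiv S G _ M).symm w, (homBimodEquiv S G _ M).injective ?_⟩
    rw [homBimodEquiv_comp, AddEquiv.apply_symm_apply, hw]
  · rintro ⟨w, rfl⟩
    refine ⟨homBimodEquiv S G _ M w ∘ₗ f₀, ?_⟩
    rw [LinearMap.comp_assoc, ← hf₁, ← LinearMap.comp_assoc, ← homBimodEquiv_comp]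
    rfl

end CategoryTheory.ProjectiveResolution

/-- let `F` be a left `R`-module, `G` an `S`-`R`-bimodule with
`Tor_1^R(G, F) = 0`. Then for every left `S`-module `M` there is an injective map of
abelian groups `Ext¹_R(F, Hom_S(G, M)) → Ext¹_S(G ⊗_R F, M)`. -/
theorem stmt2 (F : Type u) [AddCommGroup F] [Module R F]
    (G : Type u) [AddCommGroup G] [Module S G] [Module R G] [SMulCommClass R S G]
    (htor : Subsingleton
      (((Tor (ModuleCat.{u} R) 1).obj (ModuleCat.of R G)).obj (ModuleCat.of R F)))
    (M : Type u) [AddCommGroup M] [Module S M] :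
    ∃ φ : ext1 R (ModuleCat.of R F) (ModuleCat.of R (G →ₗ[S] M)) →+
        ext1 S (ModuleCat.of S (TensorProduct R G F)) (ModuleCat.of S M),
      Function.Injective φ :=
  let P := ProjectiveResolution.of (ModuleCat.of R F)
  P.exists_injective_ext1_of_exact_lTensor G
    (P.exact_lTensor_of_subsingleton_tor (ModuleCat.of R G) htor) M
end
end

section
/- If X is an R-R-bimodule which is G-torsion as a right R-module, then M ⊗_R X is G-torsion for every right R-module M. -/
/-- A Gabriel topology on a commutative ring `R`: a filter of ideals satisfying the
two Gabriel axioms. -/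
structure GabrielTopology (R : Type*) [CommRing R] where
  sets : Set (Ideal R)
  top_mem : ⊤ ∈ sets
  mem_of_le : ∀ {I J : Ideal R}, I ∈ sets → I ≤ J → J ∈ sets
  inf_mem : ∀ {I J : Ideal R}, I ∈ sets → J ∈ sets → I ⊓ J ∈ sets
  colon_mem : ∀ {I : Ideal R} (r : R), I ∈ sets → I.colon (Ideal.span {r}) ∈ sets
  mem_of_colon : ∀ {I J : Ideal R}, I ∈ sets →
    (∀ t ∈ I, J.colon (Ideal.span {t}) ∈ sets) → J ∈ sets

/-- if `X` is a `𝒢`-torsion `R`-module, then `M ⊗[R] X` is `𝒢`-torsion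
for every `R`-module `M`. -/
theorem stmt4 {R : Type*} [CommRing R] (𝒢 : GabrielTopology R)
    {X : Type*} [AddCommGroup X] [Module R X]
    (hX : ∀ x : X, Ideal.torsionOf R X x ∈ 𝒢.sets)
    (M : Type*) [AddCommGroup M] [Module R M] :
    ∀ t : TensorProduct R M X,
      Ideal.torsionOf R (TensorProduct R M X) t ∈ 𝒢.sets := by
  intro t
  induction t using TensorProduct.induction_on with
  | zero =>
    exact 𝒢.mem_of_le 𝒢.top_mem (fun r _ => by
      simp [Ideal.mem_torsionOf_iff])
  | tmul m x =>
    exact 𝒢.mem_of_le (hX x) (fun r hr => by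
      simp only [Ideal.mem_torsionOf_iff] at hr ⊢
      rw [← TensorProduct.tmul_smul, hr, TensorProduct.tmul_zero])
  | add a b ha hb =>
    exact 𝒢.mem_of_le (𝒢.inf_mem ha hb) (fun r hr => by
      simp only [Ideal.mem_inf, Ideal.mem_torsionOf_iff] at hr ⊢
      rw [smul_add, hr.1, hr.2, add_zero])
end

section
/- Let u: R → U be a flat injective ring epimorphism of commutative rings with cokernel K = U/R, and let G = {J ≤ R : JU = U} be the associated Gabriel topology. Then the annihilators of elements of K form a sub-basis for G: for every J ∈ G there exist z_1, ..., z_n ∈ U such that ∩_{i} Ann_R(z_i + R) ⊆ J. -/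
universe u v

/-- for a flat injective ring epimorphism `u : R → U` of commutative rings,
with associated Gabriel topology `𝒢 = {J : JU = U}`, for every `J ∈ 𝒢` there are finitely
many `z₁, …, zₙ ∈ U` with `⋂ᵢ Ann_R(zᵢ + R) ⊆ J`; i.e., the annihilators of elements of
`K = U/R` form a sub-basis of `𝒢`. -/
theorem stmt7 {R : Type u} [CommRing R] {U : Type v} [CommRing U] [Algebra R U]
    [Module.Flat R U]
    (hinj : Function.Injective (algebraMap R U))
    (hepi : Function.Bijective (LinearMap.mul' R U))
    (J : Ideal R) (hJ : J • (⊤ : Submodule R U) = ⊤) :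
    ∃ (n : ℕ) (z : Fin n → U),
      (⨅ i, (LinearMap.range (Algebra.linearMap R U)).comap
          (LinearMap.toSpanSingleton R U (z i))) ≤ J := by
  have h1 : (1 : U) ∈ J • (⊤ : Submodule R U) := by rw [hJ]; trivial
  have key : ∃ (n : ℕ) (a : Fin n → R) (z : Fin n → U),
      (∀ i, a i ∈ J) ∧ (1 : U) = ∑ i, a i • z i := by
    refine Submodule.smul_induction_on h1 ?_ ?_
    · intro r hr x _
      exact ⟨1, fun _ => r, fun _ => x, fun _ => hr, by simp⟩
    · rintro x y ⟨n, a, z, ha, hx⟩ ⟨m, b, w, hb, hy⟩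
      refine ⟨n + m, Fin.append a b, Fin.append z w, ?_, ?_⟩
      · intro i
        refine Fin.addCases (fun i => ?_) (fun i => ?_) i <;>
          simp [Fin.append_left, Fin.append_right, ha, hb]
      · rw [Fin.sum_univ_add]
        simp [Fin.append_left, Fin.append_right, ← hx, ← hy]
  obtain ⟨n, a, z, ha, hsum⟩ := key
  refine ⟨n, z, ?_⟩
  intro r hr
  simp only [Submodule.mem_iInf, Submodule.mem_comap, LinearMap.mem_range,
    LinearMap.toSpanSingleton_apply, Algebra.linearMap_apply] at hr
  choose s hs using hr
  have heq : algebraMap R U r = algebraMap R U (∑ i, a i * s i) := by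
    rw [map_sum]
    calc algebraMap R U r = algebraMap R U r * 1 := (mul_one _).symm
    _ = ∑ i, algebraMap R U r * (a i • z i) := by rw [hsum, Finset.mul_sum]
    _ = ∑ i, algebraMap R U (a i * s i) := by
        refine Finset.sum_congr rfl fun i _ => ?_
        rw [mul_smul_comm, ← Algebra.smul_def, ← hs i, map_mul, Algebra.smul_def]
  rw [hinj heq]
  exact Ideal.sum_mem _ fun i _ => J.mul_mem_right _ (ha i)
end

section
/- Let R be a commutative local ring and u: R → U a flat injective ring epimorphism with cokernel K = U/R. Then K is an indecomposable R-module, i.e. every idempotent endomorphism of K is 0 or the identity. -/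
universe u

open TensorProduct

theorem aux1 {R : Type u} {U : Type u} [CommRing R] [CommRing U] [Algebra R U]
    [Module.Flat R U]
    (hepi : Function.Bijective (LinearMap.mul' R U))
    (Ru : Submodule R U) (hRu : Ru = LinearMap.range (Algebra.linearMap R U))
    (k : U ⧸ Ru) :
    (1 : U) ∈ (LinearMap.ker (LinearMap.toSpanSingleton R (U ⧸ Ru) k))
      • (⊤ : Submodule R U) := by
  set g := LinearMap.toSpanSingleton R (U ⧸ Ru) k with hg
  have hcomm : ∀ a : U, a ⊗ₜ[R] (1:U) = (1:U) ⊗ₜ[R] a := by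
    intro a
    apply hepi.1
    simp [LinearMap.mul'_apply]
  have hk1 : (g.rTensor U) ((1:R) ⊗ₜ[R] (1:U)) = 0 := by
    obtain ⟨a, ha⟩ := Ru.mkQ_surjective k
    have h1 : (g.rTensor U) ((1:R) ⊗ₜ[R] (1:U)) = k ⊗ₜ[R] (1:U) := by
      simp [g, LinearMap.rTensor_tmul, LinearMap.toSpanSingleton_apply]
    rw [h1, ← ha]
    have h2 : (Ru.mkQ a) ⊗ₜ[R] (1:U) = (Ru.mkQ.rTensor U) (a ⊗ₜ[R] (1:U)) := by
      simp [LinearMap.rTensor_tmul]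
    rw [h2, hcomm a]
    have hπ1 : Ru.mkQ (1:U) = 0 := by
      simp only [Submodule.mkQ_apply, Submodule.Quotient.mk_eq_zero, hRu]
      exact ⟨1, by simp⟩
    simp [LinearMap.rTensor_tmul, hπ1]
  have hexact : Function.Exact (Submodule.subtype (LinearMap.ker g)) g :=
    LinearMap.exact_subtype_ker_map g
  have hexactU : Function.Exact ((Submodule.subtype (LinearMap.ker g)).rTensor U)
      (g.rTensor U) := Module.Flat.rTensor_exact U hexact
  obtain ⟨w, hw⟩ := (hexactU _).mp hk1
  have key : ∀ w : (LinearMap.ker g) ⊗[R] U,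
      (TensorProduct.lid R U) (((Submodule.subtype (LinearMap.ker g)).rTensor U) w)
        ∈ (LinearMap.ker g) • (⊤ : Submodule R U) := by
    intro w
    induction w using TensorProduct.induction_on with
    | zero => simp
    | tmul x y =>
        simp only [LinearMap.rTensor_tmul, Submodule.coe_subtype, TensorProduct.lid_tmul]
        exact Submodule.smul_mem_smul x.2 trivial
    | add x y hx hy =>
        rw [map_add, map_add]
        exact Submodule.add_mem _ hx hy
  have hkey := key w
  rw [hw] at hkey
  have hlid : (TensorProduct.lid R U) ((1:R) ⊗ₜ[R] (1:U)) = 1 := by simp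
  rw [hlid] at hkey
  exact hkey


theorem aux2 {R : Type u} {U : Type u} [CommRing R] [CommRing U] [Algebra R U]
    (k : U ⧸ LinearMap.range (Algebra.linearMap R U))
    (C : Submodule R (U ⧸ LinearMap.range (Algebra.linearMap R U)))
    (hC : (1 : U) ∈ (LinearMap.ker
        (LinearMap.toSpanSingleton R (U ⧸ LinearMap.range (Algebra.linearMap R U)) k))
      • (C.comap (LinearMap.range (Algebra.linearMap R U)).mkQ)) :
    k ∈ C := by
  obtain ⟨t, ht⟩ := Submodule.mkQ_surjective _ k
  have hmul : ∀ z ∈ (LinearMap.ker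
        (LinearMap.toSpanSingleton R (U ⧸ LinearMap.range (Algebra.linearMap R U)) k))
      • (C.comap (LinearMap.range (Algebra.linearMap R U)).mkQ),
      z * t ∈ C.comap (LinearMap.range (Algebra.linearMap R U)).mkQ := by
    intro z hz
    refine Submodule.smul_induction_on hz ?_ ?_
    · intro x hx s hs
      have hxk : x • k = 0 := by
        rwa [LinearMap.mem_ker, LinearMap.toSpanSingleton_apply] at hx
      have hxtm : x • t ∈ LinearMap.range (Algebra.linearMap R U) := by
        rw [← Submodule.ker_mkQ (LinearMap.range (Algebra.linearMap R U)), LinearMap.mem_ker,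
          map_smul, ht]
        exact hxk
      obtain ⟨r, hr⟩ := hxtm
      have heq : (x • s) * t = r • s := by
        rw [smul_mul_assoc, ← mul_smul_comm, ← hr, Algebra.linearMap_apply, mul_comm,
          ← Algebra.smul_def]
      rw [heq]
      exact Submodule.smul_mem _ r hs
    · intro z1 z2 h1 h2
      rw [add_mul]
      exact Submodule.add_mem _ h1 h2
  have h2 := hmul 1 hC
  rw [one_mul] at h2
  rw [← ht]
  exact h2

/-- if `R` is a commutative local ring and `u : R → U` a flat injective
ring epimorphism, then `K = U/R` is indecomposable: every idempotent endomorphism of `K`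
is `0` or the identity. -/
theorem stmt13 {R : Type u} [CommRing R] [IsLocalRing R]
    {U : Type u} [CommRing U] [Algebra R U] [Module.Flat R U]
    (hinj : Function.Injective (algebraMap R U))
    (hepi : Function.Bijective (LinearMap.mul' R U))
    (e : (U ⧸ LinearMap.range (Algebra.linearMap R U)) →ₗ[R]
        (U ⧸ LinearMap.range (Algebra.linearMap R U)))
    (he : e ∘ₗ e = e) :
    e = 0 ∨ e = LinearMap.id := by
  have hee : ∀ x, e (e x) = e x := fun x => by
    have := LinearMap.ext_iff.mp he x
    simpa using this
  have hdich : ∀ k : U ⧸ LinearMap.range (Algebra.linearMap R U), e k = k ∨ e k = 0 := by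
    intro k
    have h1 := aux1 hepi _ rfl k
    set I := LinearMap.ker
      (LinearMap.toSpanSingleton R (U ⧸ LinearMap.range (Algebra.linearMap R U)) k) with hI
    set π := (LinearMap.range (Algebra.linearMap R U)).mkQ with hπdef
    set A := LinearMap.ker (LinearMap.id - e) with hA
    set B := LinearMap.ker e with hB
    set S := A.comap π with hS
    set T := B.comap π with hT
    have hST : S ⊔ T = ⊤ := by
      rw [eq_top_iff]
      rintro x -
      obtain ⟨y, hy⟩ := Submodule.mkQ_surjective _ (e (π x))
      refine Submodule.mem_sup.mpr ⟨y, ?_, x - y, ?_, by ring⟩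
      · show π y ∈ A
        rw [hy, hA, LinearMap.mem_ker, LinearMap.sub_apply, LinearMap.id_apply, hee, sub_self]
      · show π (x - y) ∈ B
        rw [map_sub, hy, hB, LinearMap.mem_ker, map_sub, hee, sub_self]
    have hRuS : LinearMap.range (Algebra.linearMap R U) ≤ S := by
      intro z hz
      have hz0 : π z = 0 := by
        rwa [← LinearMap.mem_ker, Submodule.ker_mkQ]
      show π z ∈ A
      rw [hz0]
      exact Submodule.zero_mem _
    have hRuT : LinearMap.range (Algebra.linearMap R U) ≤ T := by
      intro z hz
      have hz0 : π z = 0 := by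
        rwa [← LinearMap.mem_ker, Submodule.ker_mkQ]
      show π z ∈ B
      rw [hz0]
      exact Submodule.zero_mem _
    have hSTinf : ∀ z, z ∈ S → z ∈ T → z ∈ LinearMap.range (Algebra.linearMap R U) := by
      intro z hzS hzT
      have h1' : e (π z) = 0 := hzT
      have h2' : π z - e (π z) = 0 := by
        have := hzS
        rw [hS, Submodule.mem_comap, hA, LinearMap.mem_ker, LinearMap.sub_apply,
          LinearMap.id_apply] at this
        exact this
      have hz0 : π z = 0 := by rw [h1', sub_zero] at h2'; exact h2'
      rwa [← Submodule.ker_mkQ (LinearMap.range (Algebra.linearMap R U)), LinearMap.mem_ker]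
    rw [← hST, Submodule.smul_sup] at h1
    obtain ⟨p, hp, q, hq, hpq⟩ := Submodule.mem_sup.mp h1
    have hpS : p ∈ S := Submodule.smul_le_right hp
    have hqT : q ∈ T := Submodule.smul_le_right hq
    have h1Ru : (1:U) ∈ LinearMap.range (Algebra.linearMap R U) := ⟨1, by simp⟩
    have hpT : p ∈ T := by
      have hsub := Submodule.sub_mem T (hRuT h1Ru) hqT
      have : (1:U) - q = p := by rw [← hpq]; ring
      rwa [this] at hsub
    have hqS : q ∈ S := by
      have hsub := Submodule.sub_mem S (hRuS h1Ru) hpS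
      have : (1:U) - p = q := by rw [← hpq]; ring
      rwa [this] at hsub
    obtain ⟨σ, hσ⟩ := hSTinf p hpS hpT
    obtain ⟨τ, hτ⟩ := hSTinf q hqS hqT
    have hστ : σ + τ = 1 := by
      apply hinj
      rw [map_add, map_one]
      rw [Algebra.linearMap_apply] at hσ hτ
      rw [hσ, hτ, hpq]
    rcases IsLocalRing.isUnit_or_isUnit_of_add_one hστ with hu | hu
    · left
      obtain ⟨v, hv⟩ := hu
      have h1IS : (1:U) ∈ I • S := by
        have hsm := Submodule.smul_mem (I • S) ((v⁻¹ : Rˣ) : R) hp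
        have heq1 : ((v⁻¹ : Rˣ) : R) • p = 1 := by
          rw [← hσ, Algebra.linearMap_apply, Algebra.smul_def, ← map_mul, ← hv,
            Units.inv_mul, map_one]
        rwa [heq1] at hsm
      have hkA : k ∈ A := aux2 k A h1IS
      rw [hA, LinearMap.mem_ker, LinearMap.sub_apply, LinearMap.id_apply, sub_eq_zero] at hkA
      exact hkA.symm
    · right
      obtain ⟨v, hv⟩ := hu
      have h1IT : (1:U) ∈ I • T := by
        have hsm := Submodule.smul_mem (I • T) ((v⁻¹ : Rˣ) : R) hq
        have heq1 : ((v⁻¹ : Rˣ) : R) • q = 1 := by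
          rw [← hτ, Algebra.linearMap_apply, Algebra.smul_def, ← map_mul, ← hv,
            Units.inv_mul, map_one]
        rwa [heq1] at hsm
      exact aux2 k B h1IT
  by_cases h0 : ∀ k, e k = 0
  · left
    refine LinearMap.ext fun x => ?_
    simpa using h0 x
  · right
    push_neg at h0
    obtain ⟨a, ha⟩ := h0
    have haA : e a = a := (hdich a).resolve_right ha
    have ha0 : a ≠ 0 := fun h => ha (by rw [h, map_zero])
    refine LinearMap.ext fun b => ?_
    rcases hdich b with hb | hb
    · simpa using hb
    · rcases hdich (a + b) with hab | hab
      · have hab2 : e (a + b) = a := by rw [map_add, haA, hb, add_zero]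
        have : a + b = a := by rw [← hab, hab2]
        have hb0 : b = 0 := by
          have := congrArg (fun z => z - a) this
          simpa using this
        simp [hb, hb0]
      · exfalso
        rw [map_add, haA, hb, add_zero] at hab
        exact ha0 hab
end

section
/- Let u: R → U be a flat injective ring epimorphism of commutative rings with associated Gabriel topology G. Then the natural ring homomorphism α from the completion Λ(R) = lim←_{J∈G} R/J to End_R(U/R) (induced by the action of Λ(R) on the G-torsion module U/R) is a ring isomorphism. -/
/-!
Since `U ⊗_R U ≅ U`, the module `K = U/R` satisfies `K ⊗_R U = 0`. Flatness of `U` turns the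
embedding `R/Ann(k) ↪ K` into an embedding `R/Ann(k) ⊗_R U ↪ K ⊗_R U = 0`, so `Ann(k) U = U`:
`K` is `𝒢`-torsion and `Λ(R)` acts on it.

Conversely, fix `f ∈ End_R(K)`. For `N ∈ 𝒢`, writing `1 = Σ aᵢ uᵢ` with `aᵢ ∈ N` shows that `f`
is multiplication by some `r ∈ R` on `(R :_U N)/R`. For `J ∈ 𝒢` one can choose `N` with
`1 ∈ J (R :_U N)`, and then `r` is unique modulo `J`: if `c (R :_U N) ⊆ R` then
`c = Σ aᵢ (c uᵢ) ∈ J` (as `R → U` is injective). These residues form the preimage of `f`.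
-/

universe u

noncomputable section

/-- The Gabriel topology associated to the ring epimorphism `R → U`:
the ideals `J` with `JU = U`. -/
def gabrielSets (R : Type u) [CommRing R] (U : Type u) [CommRing U] [Algebra R U] :
    Set (Ideal R) :=
  {J : Ideal R | J • (⊤ : Submodule R U) = ⊤}

/-- The completion `Λ(R) = lim← R/J`, for `J` ranging over the Gabriel topology,
realised as the subring of compatible families in `∏_{J} R/J`. -/
def gabrielCompletion (R : Type u) [CommRing R] (U : Type u) [CommRing U] [Algebra R U] :
    Subring ((J : gabrielSets R U) → R ⧸ (J : Ideal R)) where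
  carrier := {x | ∀ (J J' : gabrielSets R U) (h : (J : Ideal R) ≤ (J' : Ideal R)),
    Ideal.Quotient.factor h (x J) = x J'}
  zero_mem' := fun J J' h => by simp
  one_mem' := fun J J' h => by simp
  add_mem' := fun {a b} ha hb J J' h => by
    rw [Pi.add_apply, Pi.add_apply, map_add, ha J J' h, hb J J' h]
  mul_mem' := fun {a b} ha hb J J' h => by
    rw [Pi.mul_apply, Pi.mul_apply, map_mul, ha J J' h, hb J J' h]
  neg_mem' := fun {a} ha J J' h => by
    rw [Pi.neg_apply, Pi.neg_apply, map_neg, ha J J' h]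

/-- The annihilator `Ann_R(z + R) = {r : R | r z ∈ R}` of an element `z + R` of
`K = U/R`. -/
def annCoset (R : Type u) [CommRing R] (U : Type u) [CommRing U] [Algebra R U]
    (z : U) : Ideal R :=
  (LinearMap.range (Algebra.linearMap R U)).comap (LinearMap.toSpanSingleton R U z)

section GabrielTopology

variable {R : Type u} [CommRing R] {U : Type u} [CommRing U] [Algebra R U]

theorem mem_gabrielSets_iff {J : Ideal R} :
    J ∈ gabrielSets R U ↔ J.map (algebraMap R U) = ⊤ := by
  change J • ⊤ = ⊤ ↔ _
  rw [Ideal.smul_top_eq_map, ← Submodule.restrictScalars_top R U,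
    Submodule.restrictScalars_inj]

theorem mem_gabrielSets_iff_one_mem {J : Ideal R} :
    J ∈ gabrielSets R U ↔ (1 : U) ∈ J • (⊤ : Submodule R U) := by
  rw [mem_gabrielSets_iff, Ideal.eq_top_iff_one, Ideal.smul_top_eq_map,
    Submodule.restrictScalars_mem]

theorem inf_mem_gabrielSets {J J' : Ideal R} (hJ : J ∈ gabrielSets R U)
    (hJ' : J' ∈ gabrielSets R U) : J ⊓ J' ∈ gabrielSets R U := by
  rw [mem_gabrielSets_iff] at *
  refine top_le_iff.1 ?_
  calc ⊤ = (J * J').map (algebraMap R U) := by rw [Ideal.map_mul, hJ, hJ', Ideal.top_mul]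
    _ ≤ (J ⊓ J').map (algebraMap R U) := Ideal.map_mono Ideal.mul_le_inf

section TorsionAction

variable {K : Type*} [AddCommGroup K] [Module R K]

theorem torsionOf_mem_gabrielSets_of_tmul_one_eq_zero [Module.Flat R U] {k : K}
    (hk : k ⊗ₜ[R] (1 : U) = 0) : Ideal.torsionOf R K k ∈ gabrielSets R U := by
  let φ : (R ⧸ Ideal.torsionOf R K k) →ₗ[R] K :=
    (R ∙ k).subtype ∘ₗ (Ideal.quotTorsionOfEquivSpanSingleton R K k).toLinearMap
  have hφ : Function.Injective φ :=
    Subtype.val_injective.comp (Ideal.quotTorsionOfEquivSpanSingleton R K k).injective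
  have h1 : (Ideal.Quotient.mk _ 1 : R ⧸ Ideal.torsionOf R K k) ⊗ₜ[R] (1 : U) = 0 := by
    refine Module.Flat.rTensor_preserves_injective_linearMap φ hφ ?_
    have hφ1 : φ (Ideal.Quotient.mk _ 1) = k := by
      change ((Ideal.quotTorsionOfEquivSpanSingleton R K k (Submodule.Quotient.mk 1) : R ∙ k) :
        K) = k
      rw [Ideal.quotTorsionOfEquivSpanSingleton_apply_mk, one_smul]
    rw [LinearMap.rTensor_tmul, map_zero, hφ1, hk]
  rw [mem_gabrielSets_iff_one_mem, ← Submodule.Quotient.mk_eq_zero, ← one_smul R (1 : U),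
    ← TensorProduct.quotTensorEquivQuotSMul_mk_tmul, h1, map_zero]

theorem torsionOf_le_torsionOf_smul (c : R) (k : K) :
    Ideal.torsionOf R K k ≤ Ideal.torsionOf R K (c • k) := fun a ha => by
  rw [Ideal.mem_torsionOf_iff, smul_comm, (Ideal.mem_torsionOf_iff _ _).1 ha, smul_zero]

theorem inf_torsionOf_le_torsionOf_add (k k' : K) :
    Ideal.torsionOf R K k ⊓ Ideal.torsionOf R K k' ≤ Ideal.torsionOf R K (k + k') :=
  fun a ha => by
    rw [Ideal.mem_torsionOf_iff, smul_add, (Ideal.mem_torsionOf_iff _ _).1 ha.1,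
      (Ideal.mem_torsionOf_iff _ _).1 ha.2, add_zero]

variable (htors : ∀ k : K, Ideal.torsionOf R K k ∈ gabrielSets R U)

theorem out_smul_eq_of_le (x : gabrielCompletion R U) {k : K} {N : Ideal R}
    (hN : N ∈ gabrielSets R U) (hle : N ≤ Ideal.torsionOf R K k) {r : R}
    (hx : x.1 ⟨N, hN⟩ = Ideal.Quotient.mk N r) : (x.1 ⟨_, htors k⟩).out • k = r • k := by
  have h := x.2 ⟨N, hN⟩ ⟨_, htors k⟩ hle
  rw [hx, Ideal.Quotient.factor_mk, ← Ideal.Quotient.mk_out (x.1 _),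
    Ideal.Quotient.mk_eq_mk_iff_sub_mem, Ideal.mem_torsionOf_iff, sub_smul, sub_eq_zero] at h
  exact h.symm

def torsionSMul (x : gabrielCompletion R U) : Module.End R K where
  toFun k := (x.1 ⟨_, htors k⟩).out • k
  map_add' k k' := by
    have hN := inf_mem_gabrielSets (htors k) (htors k')
    have hx := (Ideal.Quotient.mk_out (x.1 ⟨_, hN⟩)).symm
    rw [out_smul_eq_of_le htors x hN (inf_torsionOf_le_torsionOf_add k k') hx,
      out_smul_eq_of_le htors x hN inf_le_left hx, out_smul_eq_of_le htors x hN inf_le_right hx,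
      smul_add]
  map_smul' c k := by
    have hx := (Ideal.Quotient.mk_out (x.1 ⟨_, htors k⟩)).symm
    rw [RingHom.id_apply,
      out_smul_eq_of_le htors x (htors k) (torsionOf_le_torsionOf_smul c k) hx, smul_comm]

theorem torsionSMul_apply_of_le (x : gabrielCompletion R U) {k : K} {N : Ideal R}
    (hN : N ∈ gabrielSets R U) (hle : N ≤ Ideal.torsionOf R K k) {r : R}
    (hx : x.1 ⟨N, hN⟩ = Ideal.Quotient.mk N r) : torsionSMul htors x k = r • k :=
  out_smul_eq_of_le htors x hN hle hx

theorem torsionSMul_apply (x : gabrielCompletion R U) (k : K) :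
    torsionSMul htors x k = (x.1 ⟨_, htors k⟩).out • k :=
  rfl

def torsionAction : gabrielCompletion R U →+* Module.End R K where
  toFun := torsionSMul htors
  map_one' := by
    ext k
    have h1 : (1 : gabrielCompletion R U).1 ⟨_, htors k⟩ = Ideal.Quotient.mk _ 1 := rfl
    rw [torsionSMul_apply_of_le htors 1 (htors k) le_rfl h1, one_smul, Module.End.one_apply]
  map_mul' x y := by
    ext k
    have hxy : (x * y).1 ⟨_, htors k⟩ = Ideal.Quotient.mk _ ((x.1 ⟨_, htors k⟩).out *
        (y.1 ⟨_, htors k⟩).out) := by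
      rw [map_mul, Ideal.Quotient.mk_out, Ideal.Quotient.mk_out]
      rfl
    rw [torsionSMul_apply_of_le htors _ (htors k) le_rfl hxy, Module.End.mul_apply,
      torsionSMul_apply htors y, torsionSMul_apply_of_le htors x (htors k)
        (torsionOf_le_torsionOf_smul _ k) (Ideal.Quotient.mk_out _).symm, mul_smul]
  map_zero' := by
    ext k
    have h0 : (0 : gabrielCompletion R U).1 ⟨_, htors k⟩ = Ideal.Quotient.mk _ 0 := rfl
    rw [torsionSMul_apply_of_le htors 0 (htors k) le_rfl h0, zero_smul, LinearMap.zero_apply]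
  map_add' x y := by
    ext k
    have hxy : (x + y).1 ⟨_, htors k⟩ = Ideal.Quotient.mk _ ((x.1 ⟨_, htors k⟩).out +
        (y.1 ⟨_, htors k⟩).out) := by
      rw [map_add, Ideal.Quotient.mk_out, Ideal.Quotient.mk_out]
      rfl
    rw [torsionSMul_apply_of_le htors _ (htors k) le_rfl hxy, LinearMap.add_apply,
      torsionSMul_apply, torsionSMul_apply, add_smul]

end TorsionAction

section QuotientByRange

local notation "𝒦" => U ⧸ LinearMap.range (Algebra.linearMap R U)

theorem mem_annCoset {z : U} {a : R} :
    a ∈ annCoset R U z ↔ a • z ∈ LinearMap.range (Algebra.linearMap R U) :=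
  Iff.rfl

theorem mk_algebraMap_eq_zero (r : R) : (Submodule.Quotient.mk (algebraMap R U r) : 𝒦) = 0 :=
  (Submodule.Quotient.mk_eq_zero _).2 ⟨r, rfl⟩

theorem torsionOf_mk (z : U) :
    Ideal.torsionOf R 𝒦 (Submodule.Quotient.mk z) = annCoset R U z := by
  ext a
  rw [Ideal.mem_torsionOf_iff, mem_annCoset, ← Submodule.Quotient.mk_smul,
    Submodule.Quotient.mk_eq_zero]

theorem tmul_one_eq_zero_of_bijective_mul' (hepi : Function.Bijective (LinearMap.mul' R U))
    (k : 𝒦) : k ⊗ₜ[R] (1 : U) = 0 := by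
  obtain ⟨z, rfl⟩ := Submodule.Quotient.mk_surjective _ k
  have hz : z ⊗ₜ[R] (1 : U) = 1 ⊗ₜ[R] z :=
    hepi.1 (by rw [LinearMap.mul'_apply, LinearMap.mul'_apply, mul_one, one_mul])
  calc Submodule.Quotient.mk z ⊗ₜ[R] (1 : U)
      = (LinearMap.range (Algebra.linearMap R U)).mkQ.rTensor U (z ⊗ₜ[R] 1) := rfl
    _ = Submodule.Quotient.mk 1 ⊗ₜ[R] z := by rw [hz]; rfl
    _ = 0 := by rw [← map_one (algebraMap R U), mk_algebraMap_eq_zero, TensorProduct.zero_tmul]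

/-- The colon `(R :_U N) = {z ∈ U | N z ⊆ R}`. -/
def colonRange (N : Ideal R) : Submodule R U where
  carrier := {z | N ≤ annCoset R U z}
  add_mem' {z z'} hz hz' a ha := by
    rw [mem_annCoset, smul_add]
    exact add_mem (hz ha) (hz' ha)
  zero_mem' a _ := by
    rw [mem_annCoset, smul_zero]
    exact zero_mem _
  smul_mem' c z hz a ha := by
    rw [mem_annCoset, smul_comm]
    exact Submodule.smul_mem _ c (hz ha)

theorem mem_colonRange {N : Ideal R} {z : U} : z ∈ colonRange N ↔ N ≤ annCoset R U z :=
  Iff.rfl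

theorem colonRange_anti {N N' : Ideal R} (h : N ≤ N') : colonRange N' ≤ colonRange (U := U) N :=
  fun _ hz => h.trans hz

theorem mul_smul_eq_smul_of_smul_eq {a b : R} {z : U} (h : a • z = algebraMap R U b) (u : U) :
    z * a • u = b • u := by
  rw [mul_smul_comm, ← smul_mul_assoc, h, ← Algebra.smul_def]

theorem mem_of_one_mem_smul (hinj : Function.Injective (algebraMap R U)) {J : Ideal R}
    {M : Submodule R U} (h1 : (1 : U) ∈ J • M) {r : R}
    (hr : ∀ m ∈ M, r • m ∈ LinearMap.range (Algebra.linearMap R U)) : r ∈ J := by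
  have hle : J • M ≤ (Submodule.map (Algebra.linearMap R U) J).comap (r • LinearMap.id) := by
    refine Submodule.smul_le.2 fun a ha m hm => ?_
    obtain ⟨b, hb⟩ := hr m hm
    refine ⟨a * b, J.mul_mem_right b ha, ?_⟩
    rw [LinearMap.smul_apply, LinearMap.id_apply, ← smul_eq_mul, LinearMap.map_smul, hb,
      smul_comm]
  obtain ⟨b, hb, hbr⟩ := hle h1
  rw [LinearMap.smul_apply, LinearMap.id_apply, Algebra.linearMap_apply,
    ← Algebra.algebraMap_eq_smul_one] at hbr
  exact hinj hbr ▸ hb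

theorem exists_apply_mk_eq_smul_of_mem_colonRange (f : Module.End R 𝒦) {N : Ideal R}
    (hN : N ∈ gabrielSets R U) :
    ∃ r : R, ∀ z ∈ colonRange N, f (Submodule.Quotient.mk z) = r • Submodule.Quotient.mk z := by
  -- Writing `1 = Σ aᵢ uᵢ` with `aᵢ ∈ N` and `f(uᵢ + R) = wᵢ + R`, one can take `t = Σ aᵢ wᵢ`.
  suffices h : ∀ y ∈ N • (⊤ : Submodule R U), ∃ t : U, ∀ z ∈ colonRange N,
      f (Submodule.Quotient.mk (z * y)) = Submodule.Quotient.mk (z * t) by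
    obtain ⟨t, ht⟩ := h 1 (mem_gabrielSets_iff_one_mem.1 hN)
    obtain ⟨r, hr⟩ : t ∈ LinearMap.range (Algebra.linearMap R U) := by
      have h1 := ht 1 fun a _ => ⟨a, (Algebra.algebraMap_eq_smul_one a)⟩
      rw [one_mul, one_mul, ← map_one (algebraMap R U), mk_algebraMap_eq_zero, map_zero] at h1
      exact (Submodule.Quotient.mk_eq_zero _).1 h1.symm
    refine ⟨r, fun z hz => ?_⟩
    calc f (Submodule.Quotient.mk z) = f (Submodule.Quotient.mk (z * 1)) := by rw [mul_one]
      _ = Submodule.Quotient.mk (z * t) := ht z hz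
      _ = r • Submodule.Quotient.mk z := by
        rw [← hr, Algebra.linearMap_apply, mul_comm, ← Algebra.smul_def,
          Submodule.Quotient.mk_smul]
  intro y hy
  refine Submodule.smul_induction_on hy (fun a ha u _ => ?_) fun y y' hy hy' => ?_
  · obtain ⟨w, hw⟩ := Submodule.Quotient.mk_surjective _ (f (Submodule.Quotient.mk u))
    refine ⟨a • w, fun z hz => ?_⟩
    obtain ⟨b, hb⟩ := mem_annCoset.1 (hz ha)
    rw [mul_smul_eq_smul_of_smul_eq hb.symm, mul_smul_eq_smul_of_smul_eq hb.symm,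
      Submodule.Quotient.mk_smul, map_smul, ← hw, Submodule.Quotient.mk_smul]
  · obtain ⟨t, ht⟩ := hy
    obtain ⟨t', ht'⟩ := hy'
    refine ⟨t + t', fun z hz => ?_⟩
    rw [mul_add, mul_add, Submodule.Quotient.mk_add, Submodule.Quotient.mk_add, map_add, ht z hz,
      ht' z hz]

theorem apply_mk_eq_smul_of_one_mem_smul (f : Module.End R 𝒦) {M : Submodule R U} {r : R}
    (hM : ∀ m ∈ M, f (Submodule.Quotient.mk m) = r • Submodule.Quotient.mk m) {z : U}
    (h1 : (1 : U) ∈ annCoset R U z • M) :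
    f (Submodule.Quotient.mk z) = r • Submodule.Quotient.mk z := by
  suffices h : ∀ y ∈ annCoset R U z • M,
      f (Submodule.Quotient.mk (z * y)) = r • Submodule.Quotient.mk (z * y) by
    simpa using h 1 h1
  intro y hy
  refine Submodule.smul_induction_on hy (fun a ha m hm => ?_) fun y y' hy hy' => ?_
  · obtain ⟨b, hb⟩ := mem_annCoset.1 ha
    rw [mul_smul_eq_smul_of_smul_eq hb.symm, Submodule.Quotient.mk_smul, map_smul, hM m hm,
      smul_comm]
  · rw [mul_add, Submodule.Quotient.mk_add, map_add, hy, hy', smul_add]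

/-- Modulo `J`, such an `r` is the component at `J` of the preimage of `f` in `Λ(R)`. -/
def ActsAsScalarAt (f : Module.End R 𝒦) (J : Ideal R) (r : R) : Prop :=
  ∃ N ∈ gabrielSets R U, (1 : U) ∈ J • colonRange N ∧
    ∀ z ∈ colonRange N, f (Submodule.Quotient.mk z) = r • Submodule.Quotient.mk z

namespace ActsAsScalarAt

theorem mono {f : Module.End R 𝒦} {J J' : Ideal R} {r : R} (h : J ≤ J')
    (hr : ActsAsScalarAt f J r) : ActsAsScalarAt f J' r := by
  obtain ⟨N, hN, h1, hf⟩ := hr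
  exact ⟨N, hN, Submodule.smul_mono_left h h1, hf⟩

theorem sub_mem (hinj : Function.Injective (algebraMap R U)) {f : Module.End R 𝒦} {J : Ideal R}
    {r r' : R} (hr : ActsAsScalarAt f J r) (hr' : ActsAsScalarAt f J r') : r - r' ∈ J := by
  obtain ⟨N, hN, h1, hf⟩ := hr
  obtain ⟨N', hN', h1', hf'⟩ := hr'
  obtain ⟨s, hs⟩ := exists_apply_mk_eq_smul_of_mem_colonRange f (inf_mem_gabrielSets hN hN')
  have key : ∀ {N₀ r₀}, (1 : U) ∈ J • colonRange N₀ → N ⊓ N' ≤ N₀ →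
      (∀ z ∈ colonRange N₀, f (Submodule.Quotient.mk z) = r₀ • Submodule.Quotient.mk z) →
      r₀ - s ∈ J := fun h1 hle hf => mem_of_one_mem_smul hinj h1 fun m hm => by
    rw [← Submodule.Quotient.mk_eq_zero, Submodule.Quotient.mk_smul, sub_smul, ← hf m hm,
      ← hs m (colonRange_anti hle hm), sub_self]
  simpa using J.sub_mem (key h1 inf_le_left hf) (key h1' inf_le_right hf')

theorem apply_mk {f : Module.End R 𝒦} {r : R} {z : U} (hr : ActsAsScalarAt f (annCoset R U z) r) :
    f (Submodule.Quotient.mk z) = r • Submodule.Quotient.mk z :=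
  let ⟨_, _, h1, hf⟩ := hr
  apply_mk_eq_smul_of_one_mem_smul f hf h1

end ActsAsScalarAt

variable [Module.Flat R U]

theorem torsionOf_mem_gabrielSets_of_bijective_mul'
    (hepi : Function.Bijective (LinearMap.mul' R U)) (k : 𝒦) :
    Ideal.torsionOf R 𝒦 k ∈ gabrielSets R U :=
  torsionOf_mem_gabrielSets_of_tmul_one_eq_zero (tmul_one_eq_zero_of_bijective_mul' hepi k)

theorem annCoset_mem_gabrielSets (hepi : Function.Bijective (LinearMap.mul' R U)) (z : U) :
    annCoset R U z ∈ gabrielSets R U :=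
  torsionOf_mk (R := R) z ▸ torsionOf_mem_gabrielSets_of_bijective_mul' hepi _

theorem exists_le_one_mem_smul_colonRange (hepi : Function.Bijective (LinearMap.mul' R U))
    {J : Ideal R} (hJ : J ∈ gabrielSets R U) :
    ∃ N ∈ gabrielSets R U, N ≤ J ∧ (1 : U) ∈ J • colonRange N := by
  suffices h : ∀ y ∈ J • (⊤ : Submodule R U), ∃ N ∈ gabrielSets R U, y ∈ J • colonRange N by
    obtain ⟨N, hN, h1⟩ := h 1 (mem_gabrielSets_iff_one_mem.1 hJ)
    exact ⟨N ⊓ J, inf_mem_gabrielSets hN hJ, inf_le_right,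
      Submodule.smul_mono le_rfl (colonRange_anti inf_le_left) h1⟩
  intro y hy
  refine Submodule.smul_induction_on hy (fun a ha u _ => ?_) fun y y' hy hy' => ?_
  · exact ⟨annCoset R U u, annCoset_mem_gabrielSets hepi u,
      Submodule.smul_mem_smul ha (mem_colonRange.2 le_rfl)⟩
  · obtain ⟨N, hN, hyN⟩ := hy
    obtain ⟨N', hN', hyN'⟩ := hy'
    exact ⟨N ⊓ N', inf_mem_gabrielSets hN hN', add_mem
      (Submodule.smul_mono le_rfl (colonRange_anti inf_le_left) hyN)
      (Submodule.smul_mono le_rfl (colonRange_anti inf_le_right) hyN')⟩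

theorem exists_actsAsScalarAt (hepi : Function.Bijective (LinearMap.mul' R U))
    (f : Module.End R 𝒦) {J : Ideal R} (hJ : J ∈ gabrielSets R U) :
    ∃ r, ActsAsScalarAt f J r := by
  obtain ⟨N, hN, -, h1⟩ := exists_le_one_mem_smul_colonRange hepi hJ
  obtain ⟨r, hr⟩ := exists_apply_mk_eq_smul_of_mem_colonRange f hN
  exact ⟨r, N, hN, h1, hr⟩

theorem exists_mk_eq_and_actsAsScalarAt (hepi : Function.Bijective (LinearMap.mul' R U))
    (x : gabrielCompletion R U) {J : Ideal R} (hJ : J ∈ gabrielSets R U) :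
    ∃ r, x.1 ⟨J, hJ⟩ = Ideal.Quotient.mk J r ∧
      ActsAsScalarAt
        (torsionSMul (K := 𝒦) (torsionOf_mem_gabrielSets_of_bijective_mul' hepi) x) J r := by
  obtain ⟨N, hN, hNJ, h1⟩ := exists_le_one_mem_smul_colonRange hepi hJ
  have hr := (Ideal.Quotient.mk_out (x.1 ⟨N, hN⟩)).symm
  refine ⟨(x.1 ⟨N, hN⟩).out, ?_, N, hN, h1, fun z hz => ?_⟩
  · rw [← x.2 ⟨N, hN⟩ ⟨J, hJ⟩ hNJ, ← Ideal.Quotient.factor_mk hNJ, Ideal.Quotient.mk_out]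
  · exact torsionSMul_apply_of_le _ x hN ((mem_colonRange.1 hz).trans (torsionOf_mk z).ge) hr

def ofEnd (hinj : Function.Injective (algebraMap R U))
    (hepi : Function.Bijective (LinearMap.mul' R U)) (f : Module.End R 𝒦) :
    gabrielCompletion R U :=
  ⟨fun J => Ideal.Quotient.mk _ (exists_actsAsScalarAt hepi f J.2).choose, fun J J' h => by
    rw [Ideal.Quotient.factor_mk, Ideal.Quotient.mk_eq_mk_iff_sub_mem]
    exact ((exists_actsAsScalarAt hepi f J.2).choose_spec.mono h).sub_mem hinj
      (exists_actsAsScalarAt hepi f J'.2).choose_spec⟩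

theorem ofEnd_apply (hinj : Function.Injective (algebraMap R U))
    (hepi : Function.Bijective (LinearMap.mul' R U)) {f : Module.End R 𝒦} {J : Ideal R}
    (hJ : J ∈ gabrielSets R U) {r : R} (hr : ActsAsScalarAt f J r) :
    (ofEnd hinj hepi f).1 ⟨J, hJ⟩ = Ideal.Quotient.mk J r :=
  Ideal.Quotient.mk_eq_mk_iff_sub_mem _ _ |>.2 <|
    (exists_actsAsScalarAt hepi f hJ).choose_spec.sub_mem hinj hr

def completionEquivEnd (hinj : Function.Injective (algebraMap R U))
    (hepi : Function.Bijective (LinearMap.mul' R U)) : gabrielCompletion R U ≃+* Module.End R 𝒦 :=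
  { torsionAction (K := 𝒦) (torsionOf_mem_gabrielSets_of_bijective_mul' hepi) with
    invFun := ofEnd hinj hepi
    left_inv := fun x => by
      ext J
      obtain ⟨r, hx, hr⟩ := exists_mk_eq_and_actsAsScalarAt hepi x J.2
      exact (ofEnd_apply hinj hepi J.2 hr).trans hx.symm
    right_inv := fun f => by
      refine LinearMap.ext fun k => ?_
      obtain ⟨z, rfl⟩ := Submodule.Quotient.mk_surjective _ k
      have hz := annCoset_mem_gabrielSets hepi z
      obtain ⟨r, hr⟩ := exists_actsAsScalarAt hepi f hz
      exact (torsionSMul_apply_of_le _ _ hz (torsionOf_mk z).ge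
        (ofEnd_apply hinj hepi hz hr)).trans hr.apply_mk.symm }

end QuotientByRange

end GabrielTopology

/-- for a flat injective ring epimorphism `u : R → U` of commutative rings
with associated Gabriel topology `𝒢`, the natural ring homomorphism from the completion
`Λ(R) = lim←_{J ∈ 𝒢} R/J` to `End_R(U/R)`, induced by the action of `Λ(R)` on the
`𝒢`-torsion module `U/R`, is a ring isomorphism. -/
theorem stmt15 {R : Type u} [CommRing R] {U : Type u} [CommRing U] [Algebra R U]
    [Module.Flat R U]
    (hinj : Function.Injective (algebraMap R U))
    (hepi : Function.Bijective (LinearMap.mul' R U)) :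
    ∃ α : gabrielCompletion R U ≃+*
        Module.End R (U ⧸ LinearMap.range (Algebra.linearMap R U)),
      ∀ (x : gabrielCompletion R U) (z : U) (r : R)
        (hz : annCoset R U z ∈ gabrielSets R U),
        x.1 ⟨annCoset R U z, hz⟩ = Ideal.Quotient.mk (annCoset R U z) r →
        α x (Submodule.Quotient.mk z) = Submodule.Quotient.mk (r • z) :=
  ⟨completionEquivEnd hinj hepi, fun x z r hz hx =>
    (torsionSMul_apply_of_le _ x hz (torsionOf_mk z).ge hx).trans
      (Submodule.Quotient.mk_smul _ r z).symm⟩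

end
end

section
/- Let R be a commutative ring, u: R → U a flat injective ring epimorphism with p.dim_R U ≤ 1 and cokernel K. Then every R-module M admits a special Gen(U)-preenvelope with cokernel a direct sum of copies of K: there is a short exact sequence 0 → M → Z → K^{(α)} → 0 with Z ∈ Gen(U). -/
universe u

/-!
Take the free presentation `R^(M) → M` and push it out along the inclusion
`R^(M) ↪ U^(M)`. Since pushouts preserve cokernels, the pushout `Z` contains `M` with cokernel
`U^(M) / R^(M) = K^(M)`, and since `R^(M) → M` is onto, `Z` is an epimorphic image of `U^(M)`.
-/

open Function LinearMap

section Pushout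

variable {R F G M C : Type*} [Ring R] [AddCommGroup F] [AddCommGroup G] [AddCommGroup M]
  [AddCommGroup C] [Module R F] [Module R G] [Module R M] [Module R C]
  (f : F →ₗ[R] M) (g : F →ₗ[R] G)

abbrev Pushout : Type _ := (M × G) ⧸ range (f.prod (-g))

namespace Pushout

def inl : M →ₗ[R] Pushout f g := (range (f.prod (-g))).mkQ ∘ₗ LinearMap.inl R M G

def inr : G →ₗ[R] Pushout f g := (range (f.prod (-g))).mkQ ∘ₗ LinearMap.inr R M G

theorem mk_eq_mk_iff {x y : M × G} :
    (Submodule.Quotient.mk x : Pushout f g) = Submodule.Quotient.mk y ↔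
      ∃ a, f a = x.1 - y.1 ∧ -g a = x.2 - y.2 := by
  simp [Submodule.Quotient.eq, Prod.ext_iff]

def desc (a : M →ₗ[R] C) (b : G →ₗ[R] C) (hab : a ∘ₗ f = b ∘ₗ g) : Pushout f g →ₗ[R] C :=
  (range (f.prod (-g))).liftQ (a.coprod b) <| range_le_ker_iff.2 <| by
    rw [coprod_comp_prod, comp_neg, hab, add_neg_cancel]

@[simp]
theorem desc_mk (a : M →ₗ[R] C) (b : G →ₗ[R] C) (hab : a ∘ₗ f = b ∘ₗ g) (x : M × G) :
    desc f g a b hab (Submodule.Quotient.mk x) = a x.1 + b x.2 := rfl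

variable {f g}

theorem inl_injective (hg : Injective g) : Injective (inl f g) := by
  intro m m' h
  obtain ⟨a, hfa, hga⟩ := (mk_eq_mk_iff f g).1 h
  have : a = 0 := hg (by simpa using hga)
  simpa [this, sub_eq_zero, eq_comm] using hfa

theorem inr_surjective (hf : Surjective f) : Surjective (inr f g) := by
  intro z
  obtain ⟨⟨m, v⟩, rfl⟩ := Submodule.mkQ_surjective _ z
  obtain ⟨a, rfl⟩ := hf m
  exact ⟨v + g a, (mk_eq_mk_iff f g).2 ⟨-a, by simp⟩⟩

variable {h : G →ₗ[R] C}

theorem desc_zero_surjective (hgh : h ∘ₗ g = 0) (hh : Surjective h) :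
    Surjective (desc f g 0 h (by rw [hgh, zero_comp])) := by
  intro c
  obtain ⟨v, rfl⟩ := hh c
  exact ⟨inr f g v, by simp [inr]⟩

theorem exact_inl_desc_zero (hgh : Exact g h) :
    Exact (inl f g) (desc f g 0 h (by rw [hgh.linearMap_comp_eq_zero, zero_comp])) := by
  intro z
  obtain ⟨⟨m, v⟩, rfl⟩ := Submodule.mkQ_surjective _ z
  constructor
  · intro hv
    obtain ⟨a, rfl⟩ := (hgh v).1 (by simpa using hv)
    exact ⟨m + f a, (mk_eq_mk_iff f g).2 ⟨a, by simp⟩⟩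
  · rintro ⟨m', hm'⟩
    rw [← hm']
    simp [inl]

end Pushout

end Pushout

theorem Finsupp.exact_mapRange_linearMap {R M N P : Type*} [Ring R] [AddCommGroup M]
    [AddCommGroup N] [AddCommGroup P] [Module R M] [Module R N] [Module R P]
    {f : M →ₗ[R] N} {g : N →ₗ[R] P} (hf : Injective f) (hfg : Exact f g) (I : Type*) :
    Exact (mapRange.linearMap (α := I) f) (mapRange.linearMap g) := by
  rw [LinearMap.exact_iff, ker_mapRange, range_mapRange_linearMap f (ker_eq_bot.2 hf),
    hfg.linearMap_ker_eq]

theorem stmt17_general {R : Type u} [CommRing R] {U : Type u} [CommRing U] [Algebra R U]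
    (hinj : Function.Injective (algebraMap R U))
    (M : Type u) [AddCommGroup M] [Module R M] :
    ∃ (Z : Type u) (_ : AddCommGroup Z) (_ : Module R Z) (α : Type u)
      (i : M →ₗ[R] Z)
      (q : Z →ₗ[R] (α →₀ (U ⧸ LinearMap.range (Algebra.linearMap R U)))),
      Function.Injective i ∧ Function.Surjective q ∧
      LinearMap.range i = LinearMap.ker q ∧
      ∃ (κ : Type u) (g : (κ →₀ U) →ₗ[R] Z), Function.Surjective g := by
  let l := Algebra.linearMap R U
  let presentation : (M →₀ R) →ₗ[R] M := Finsupp.linearCombination R id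
  let inclusion : (M →₀ R) →ₗ[R] (M →₀ U) := Finsupp.mapRange.linearMap l
  let quotient := Finsupp.mapRange.linearMap (α := M) (range l).mkQ
  have hinclusion : Injective inclusion := Finsupp.mapRange_injective _ (map_zero l) hinj
  have hexact : Exact inclusion quotient :=
    Finsupp.exact_mapRange_linearMap hinj l.exact_map_mkQ_range M
  refine ⟨Pushout presentation inclusion, inferInstance, inferInstance, M,
    Pushout.inl presentation inclusion, Pushout.desc presentation inclusion 0 quotient _,
    Pushout.inl_injective hinclusion,
    Pushout.desc_zero_surjective hexact.linearMap_comp_eq_zero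
      (Finsupp.mapRange_surjective _ (map_zero _) (Submodule.mkQ_surjective _)),
    (LinearMap.exact_iff.1 (Pushout.exact_inl_desc_zero hexact)).symm,
    M, Pushout.inr presentation inclusion,
    Pushout.inr_surjective (Finsupp.linearCombination_id_surjective R M)⟩

/-- let `u : R → U` be a flat injective ring epimorphism of commutative
rings with `p.dim_R U ≤ 1` (expressed by a length-one projective resolution of `U`) and
`K = U/R`. Then every `R`-module `M` admits a special `Gen(U)`-preenvelope with cokernel
a direct sum of copies of `K`: there is a short exact sequence `0 → M → Z → K^(α) → 0`
with `Z ∈ Gen(U)` (an epimorphic image of a direct sum of copies of `U`). -/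
theorem stmt17 {R : Type u} [CommRing R] {U : Type u} [CommRing U] [Algebra R U]
    [Module.Flat R U]
    (hinj : Function.Injective (algebraMap R U))
    (hepi : Function.Bijective (LinearMap.mul' R U))
    (hpd : ∃ (P₀ P₁ : Type u) (_ : AddCommGroup P₀) (_ : AddCommGroup P₁)
        (_ : Module R P₀) (_ : Module R P₁) (ι : P₁ →ₗ[R] P₀) (p : P₀ →ₗ[R] U),
        Module.Projective R P₀ ∧ Module.Projective R P₁ ∧
        Function.Injective ι ∧ Function.Surjective p ∧
        LinearMap.range ι = LinearMap.ker p)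
    (M : Type u) [AddCommGroup M] [Module R M] :
    ∃ (Z : Type u) (_ : AddCommGroup Z) (_ : Module R Z) (α : Type u)
      (i : M →ₗ[R] Z)
      (q : Z →ₗ[R] (α →₀ (U ⧸ LinearMap.range (Algebra.linearMap R U)))),
      Function.Injective i ∧ Function.Surjective q ∧
      LinearMap.range i = LinearMap.ker q ∧
      ∃ (κ : Type u) (g : (κ →₀ U) →ₗ[R] Z), Function.Surjective g :=
  stmt17_general hinj M
end

section
/- Let u: R → U be a flat ring epimorphism of commutative rings with kernel I, and let G_u = {J : JU = U} be the associated Gabriel topology. Then every G_u-divisible R-module is annihilated by I. -/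
universe u v

/-!
For `r ∈ ker u` the annihilator `J = Ann(r)` lies in `G_u`: in the flat module `U` every
relation `r • x = 0` is trivial (equational criterion), so `x ∈ J • U`. Divisibility then
gives `M = J • M`, which `r` kills.
-/

open Submodule

namespace Module.Flat

theorem mem_annihilator_smul_top_of_smul_eq_zero {R N : Type*} [CommRing R] [AddCommGroup N]
    [Module R N] [Module.Flat R N] {r : R} {x : N} (hx : r • x = 0) :
    x ∈ (R ∙ r).annihilator • (⊤ : Submodule R N) := by
  obtain ⟨k, a, y, hxy, hay⟩ :=
    isTrivialRelation_of_sum_smul_eq_zero (ι := Unit) (f := fun _ ↦ r) (x := fun _ ↦ x)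
      (by simpa using hx)
  rw [show x = _ from hxy ()]
  refine sum_mem fun j _ ↦ smul_mem_smul ?_ mem_top
  simpa [mem_annihilator_span_singleton, smul_eq_mul, mul_comm] using hay j

theorem annihilator_smul_top_eq_top {R N : Type*} [CommRing R] [AddCommGroup N]
    [Module R N] [Module.Flat R N] {r : R} (hr : ∀ x : N, r • x = 0) :
    (R ∙ r).annihilator • (⊤ : Submodule R N) = ⊤ :=
  eq_top_iff.mpr fun x _ ↦ mem_annihilator_smul_top_of_smul_eq_zero (hr x)

end Module.Flat

theorem Submodule.smul_eq_zero_of_annihilator_smul_top_eq_top {R M : Type*} [CommRing R]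
    [AddCommGroup M] [Module R M] {r : R}
    (h : (R ∙ r).annihilator • (⊤ : Submodule R M) = ⊤) (m : M) : r • m = 0 := by
  have hle : (R ∙ r).annihilator • (⊤ : Submodule R M) ≤ LinearMap.ker (LinearMap.lsmul R M r) :=
    smul_le.mpr fun s hs n _ ↦ by
      rw [mem_annihilator_span_singleton, smul_eq_mul] at hs
      simp [smul_smul, hs]
  exact hle (h.symm ▸ mem_top)

theorem stmt19_general {R : Type u} [CommRing R] {U : Type v} [CommRing U] [Algebra R U]
    [Module.Flat R U]
    {M : Type*} [AddCommGroup M] [Module R M]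
    (hdiv : ∀ J : Ideal R, J • (⊤ : Submodule R U) = ⊤ → J • (⊤ : Submodule R M) = ⊤) :
    ∀ r ∈ RingHom.ker (algebraMap R U), ∀ m : M, r • m = 0 := by
  intro r hr
  have hrU : ∀ x : U, r • x = 0 := fun x ↦ by
    rw [Algebra.smul_def, RingHom.mem_ker.mp hr, zero_mul]
  exact smul_eq_zero_of_annihilator_smul_top_eq_top
    (hdiv _ (Module.Flat.annihilator_smul_top_eq_top hrU))

/-- if `u : R → U` is a flat ring epimorphism of commutative rings with
kernel `I`, then every `𝒢ᵤ`-divisible `R`-module `M` (i.e. `JM = M` whenever `JU = U`)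
is annihilated by `I`. -/
theorem stmt19 {R : Type u} [CommRing R] {U : Type v} [CommRing U] [Algebra R U]
    [Module.Flat R U]
    (hepi : Function.Bijective (LinearMap.mul' R U))
    {M : Type*} [AddCommGroup M] [Module R M]
    (hdiv : ∀ J : Ideal R, J • (⊤ : Submodule R U) = ⊤ → J • (⊤ : Submodule R M) = ⊤) :
    ∀ r ∈ RingHom.ker (algebraMap R U), ∀ m : M, r • m = 0 :=
  stmt19_general hdiv
end
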